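/- arXiv:2106.07243 — 3 statements merged into one kernel-verified Lean document; each statement's English description precedes it below -/
import Mathlib

section
/- Let f₁,…,fₙ : ℝ^p → ℝ be differentiable with L-Lipschitz gradients, let f = (1/n)Σ_{i=1}^n f_i, and let x* ∈ ℝ^p satisfy ∇f(x*) = 0. Let r, c ∈ ℝⁿ with rᵀ𝟏 = n, set P_C = I − (1/n)c𝟏ᵀ, and let ‖·‖_R, ‖·‖_C be norms on ℝⁿ with ‖x‖₂ ≤ ‖x‖_R and ‖x‖₂ ≤ ‖x‖_C for all x, extended columnwise to n×p matrices. Then for all X, Y ∈ ℝ^{n×p} with 𝟏ᵀY = 𝟏ᵀ∇F(X), setting x̄ = (1/n)Xᵀr ∈ ℝ^p: ‖Y‖_F² ≤ 3·|||P_C Y|||_C² + (3L²‖c‖₂²/n)·|||X − 𝟏x̄ᵀ|||_R² + 3L²‖c‖₂²·‖x̄ − x*‖₂². -/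
open Matrix
open scoped BigOperators

/-- The Euclidean norm on `Fin m → ℝ`. -/
noncomputable def e2norm {m : ℕ} (x : Fin m → ℝ) : ℝ := Real.sqrt (∑ i, x i ^ 2)

/-- The Frobenius norm of a matrix. -/
noncomputable def froNorm {n p : ℕ} (A : Matrix (Fin n) (Fin p) ℝ) : ℝ :=
  Real.sqrt (∑ i, ∑ j, A i j ^ 2)

/-- The columnwise matrix norm associated with a vector norm `N`. -/
noncomputable def mNorm {n p : ℕ} (N : (Fin n → ℝ) → ℝ) (A : Matrix (Fin n) (Fin p) ℝ) : ℝ :=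
  Real.sqrt (∑ j, N (fun i => A i j) ^ 2)

/-- The gradient of `f : ℝ^m → ℝ` at `x`, as the vector of partial derivatives. -/
noncomputable def grad {m : ℕ} (f : (Fin m → ℝ) → ℝ) (x : Fin m → ℝ) : Fin m → ℝ :=
  fun j => fderiv ℝ f x (Pi.single j 1)

/-- `∇F(X)`: the matrix whose `i`-th row is `∇f_i` evaluated at the `i`-th row of `X`. -/
noncomputable def gradF {n p : ℕ} (f : Fin n → (Fin p → ℝ) → ℝ)
    (X : Matrix (Fin n) (Fin p) ℝ) : Matrix (Fin n) (Fin p) ℝ :=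
  Matrix.of fun i j => grad (f i) (fun j' => X i j') j

/-- `N` is a norm on `Fin n → ℝ`. -/
def IsVecNorm {n : ℕ} (N : (Fin n → ℝ) → ℝ) : Prop :=
  (∀ x y, N (x + y) ≤ N x + N y) ∧ (∀ (c : ℝ) (x), N (c • x) = |c| * N x) ∧
    (∀ x, N x = 0 → x = 0)

lemma e2norm_eq_norm {m : ℕ} (x : Fin m → ℝ) :
    e2norm x = ‖(WithLp.equiv 2 (Fin m → ℝ)).symm x‖ := by
  rw [EuclideanSpace.norm_eq]
  simp [e2norm, Real.norm_eq_abs, sq_abs]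

lemma e2norm_nonneg {m : ℕ} (x : Fin m → ℝ) : 0 ≤ e2norm x := Real.sqrt_nonneg _

lemma sq_e2norm {m : ℕ} (x : Fin m → ℝ) : e2norm x ^ 2 = ∑ i, x i ^ 2 :=
  Real.sq_sqrt (by positivity)

lemma e2norm_add_le {m : ℕ} (x y : Fin m → ℝ) : e2norm (x + y) ≤ e2norm x + e2norm y := by
  simp only [e2norm_eq_norm]
  exact norm_add_le ((WithLp.equiv 2 (Fin m → ℝ)).symm x) ((WithLp.equiv 2 (Fin m → ℝ)).symm y)

lemma e2norm_smul {m : ℕ} (a : ℝ) (x : Fin m → ℝ) : e2norm (a • x) = |a| * e2norm x := by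
  simp only [e2norm_eq_norm]
  have : (WithLp.equiv 2 (Fin m → ℝ)).symm (a • x)
      = a • (WithLp.equiv 2 (Fin m → ℝ)).symm x := rfl
  rw [this, norm_smul, Real.norm_eq_abs]

lemma e2norm_sum_le {m k : ℕ} (g : Fin k → (Fin m → ℝ)) :
    e2norm (∑ i, g i) ≤ ∑ i, e2norm (g i) := by
  simp only [e2norm_eq_norm]
  have : (WithLp.equiv 2 (Fin m → ℝ)).symm (∑ i, g i)
      = ∑ i, (WithLp.equiv 2 (Fin m → ℝ)).symm (g i) := WithLp.toLp_sum _ _ _ _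
  rw [this]
  exact norm_sum_le _ _

theorem stmt7 {n p : ℕ} (f : Fin n → (Fin p → ℝ) → ℝ) (L : ℝ)
    (hf : ∀ i, Differentiable ℝ (f i))
    (hL : ∀ i x y, e2norm (grad (f i) x - grad (f i) y) ≤ L * e2norm (x - y))
    (xstar : Fin p → ℝ)
    (hstar : grad (fun x => (n : ℝ)⁻¹ * ∑ i, f i x) xstar = 0)
    (r c : Fin n → ℝ) (hr_sum : ∑ i, r i = n)
    (NR NC : (Fin n → ℝ) → ℝ) (hNR : IsVecNorm NR) (hNC : IsVecNorm NC)
    (hNR_ge : ∀ x, e2norm x ≤ NR x) (hNC_ge : ∀ x, e2norm x ≤ NC x)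
    (X Y : Matrix (Fin n) (Fin p) ℝ)
    (hY : ∀ j, ∑ i, Y i j = ∑ i, gradF f X i j) :
    let xbar : Fin p → ℝ := (n : ℝ)⁻¹ • (Xᵀ *ᵥ r)
    let PC : Matrix (Fin n) (Fin n) ℝ := 1 - (n : ℝ)⁻¹ • Matrix.vecMulVec c (fun _ => 1)
    froNorm Y ^ 2 ≤ 3 * mNorm NC (PC * Y) ^ 2
      + 3 * L ^ 2 * e2norm c ^ 2 / n *
          mNorm NR (X - Matrix.vecMulVec (fun _ => 1) xbar) ^ 2
      + 3 * L ^ 2 * e2norm c ^ 2 * e2norm (xbar - xstar) ^ 2 := by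
  intro xbar PC
  rcases Nat.eq_zero_or_pos n with hn | hn
  · subst hn
    have hY0 : froNorm Y = 0 := by
      simp [froNorm, Finset.univ_eq_empty]
    rw [hY0]
    have h1 : 0 ≤ 3 * mNorm NC (PC * Y) ^ 2 := by positivity
    have h2 : 0 ≤ 3 * L ^ 2 * e2norm c ^ 2 / (0:ℕ) *
        mNorm NR (X - Matrix.vecMulVec (fun _ => 1) xbar) ^ 2 := by positivity
    have h3 : 0 ≤ 3 * L ^ 2 * e2norm c ^ 2 * e2norm (xbar - xstar) ^ 2 := by positivity
    nlinarith
  have hn' : (0:ℝ) < n := by exact_mod_cast hn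
  -- gradient sum vanishes at xstar
  have hzero : ∀ j, ∑ i, grad (f i) xstar j = 0 := by
    intro j
    have hdiff : ∀ i ∈ Finset.univ, DifferentiableAt ℝ (f i) xstar :=
      fun i _ => (hf i).differentiableAt
    have h1 : fderiv ℝ (fun x => (n:ℝ)⁻¹ * ∑ i, f i x) xstar
        = (n:ℝ)⁻¹ • ∑ i, fderiv ℝ (f i) xstar := by
      rw [fderiv_const_mul (DifferentiableAt.fun_sum hdiff), fderiv_fun_sum hdiff]
    have h2 := congrFun hstar j
    simp only [grad, h1, ContinuousLinearMap.smul_apply, ContinuousLinearMap.sum_apply,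
      smul_eq_mul, Pi.zero_apply] at h2
    have h3 : ∑ i, fderiv ℝ (f i) xstar (Pi.single j 1) = 0 := by
      rcases mul_eq_zero.1 h2 with h | h
      · exact absurd h (by positivity)
      · exact h
    simpa [grad] using h3
  -- the deviation vectors
  set V : Fin n → (Fin p → ℝ) := fun i => grad (f i) (fun j' => X i j') - grad (f i) xbar with hV
  set W : Fin n → (Fin p → ℝ) := fun i => grad (f i) xbar - grad (f i) xstar with hW
  set a : Fin p → ℝ := ∑ i, V i with ha
  set b : Fin p → ℝ := ∑ i, W i with hb
  have haj : ∀ j, a j = ∑ i, V i j := by intro j; rw [ha]; exact Finset.sum_apply j _ _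
  have hbj : ∀ j, b j = ∑ i, W i j := by intro j; rw [hb]; exact Finset.sum_apply j _ _
  have hS : ∀ j, ∑ i, Y i j = a j + b j := by
    intro j
    rw [hY j, haj j, hbj j]
    have : ∀ i : Fin n, gradF f X i j = V i j + W i j + grad (f i) xstar j := by
      intro i
      simp only [gradF, Matrix.of_apply, hV, hW, Pi.sub_apply]
      ring
    rw [Finset.sum_congr rfl fun i _ => this i, Finset.sum_add_distrib,
      Finset.sum_add_distrib, hzero j, add_zero]
  -- entries of PC * Y
  have hPC : ∀ i j, (PC * Y) i j = Y i j - (n:ℝ)⁻¹ * c i * ∑ k, Y k j := by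
    intro i j
    rw [Matrix.mul_apply]
    have hPik : ∀ k, PC i k = (if i = k then (1:ℝ) else 0) - (n:ℝ)⁻¹ * c i := by
      intro k
      simp [PC, Matrix.one_apply, Matrix.vecMulVec_apply]
    calc ∑ k, PC i k * Y k j
        = ∑ k, ((if i = k then (1:ℝ) else 0) * Y k j - (n:ℝ)⁻¹ * c i * Y k j) := by
          apply Finset.sum_congr rfl
          intro k _
          rw [hPik k]
          ring
      _ = Y i j - (n:ℝ)⁻¹ * c i * ∑ k, Y k j := by
          rw [Finset.sum_sub_distrib, Finset.mul_sum]
          congr 1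
          simp
  -- columnwise decomposition of Y
  have hcol : ∀ j, (fun i => Y i j)
      = (fun i => (PC * Y) i j) + ((n:ℝ)⁻¹ * a j) • c + ((n:ℝ)⁻¹ * b j) • c := by
    intro j
    funext i
    simp only [Pi.add_apply, Pi.smul_apply, smul_eq_mul]
    rw [hPC i j, hS j]
    ring
  -- per-column bound
  have hcolbound : ∀ j, e2norm (fun i => Y i j) ^ 2
      ≤ 3 * (NC (fun i => (PC * Y) i j) ^ 2
        + ((n:ℝ)⁻¹ * a j) ^ 2 * e2norm c ^ 2 + ((n:ℝ)⁻¹ * b j) ^ 2 * e2norm c ^ 2) := by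
    intro j
    have h1 : e2norm (fun i => Y i j) ≤ e2norm (fun i => (PC * Y) i j)
        + |(n:ℝ)⁻¹ * a j| * e2norm c + |(n:ℝ)⁻¹ * b j| * e2norm c := by
      rw [hcol j]
      calc e2norm ((fun i => (PC * Y) i j) + ((n:ℝ)⁻¹ * a j) • c + ((n:ℝ)⁻¹ * b j) • c)
          ≤ e2norm ((fun i => (PC * Y) i j) + ((n:ℝ)⁻¹ * a j) • c)
            + e2norm (((n:ℝ)⁻¹ * b j) • c) := e2norm_add_le _ _
        _ ≤ e2norm (fun i => (PC * Y) i j) + e2norm (((n:ℝ)⁻¹ * a j) • c)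
            + e2norm (((n:ℝ)⁻¹ * b j) • c) := by
            exact add_le_add_left (e2norm_add_le _ _) _
        _ = _ := by rw [e2norm_smul, e2norm_smul]
    have h2 : e2norm (fun i => (PC * Y) i j) ≤ NC (fun i => (PC * Y) i j) :=
      hNC_ge _
    have h0 : 0 ≤ e2norm (fun i => (PC * Y) i j) := e2norm_nonneg _
    have h0' : 0 ≤ e2norm (fun i => Y i j) := e2norm_nonneg _
    have hc0 : 0 ≤ e2norm c := e2norm_nonneg _
    have hA := abs_nonneg ((n:ℝ)⁻¹ * a j)
    have hB := abs_nonneg ((n:ℝ)⁻¹ * b j)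
    have hA2 : |(n:ℝ)⁻¹ * a j| ^ 2 = ((n:ℝ)⁻¹ * a j) ^ 2 := sq_abs _
    have hB2 : |(n:ℝ)⁻¹ * b j| ^ 2 = ((n:ℝ)⁻¹ * b j) ^ 2 := sq_abs _
    nlinarith [sq_nonneg (NC (fun i => (PC * Y) i j) - |(n:ℝ)⁻¹ * a j| * e2norm c),
      sq_nonneg (NC (fun i => (PC * Y) i j) - |(n:ℝ)⁻¹ * b j| * e2norm c),
      sq_nonneg (|(n:ℝ)⁻¹ * a j| * e2norm c - |(n:ℝ)⁻¹ * b j| * e2norm c),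
      mul_nonneg hA hc0, mul_nonneg hB hc0]
  -- identities for squares of the matrix norms
  have hfro : froNorm Y ^ 2 = ∑ j, e2norm (fun i => Y i j) ^ 2 := by
    have h1 : froNorm Y ^ 2 = ∑ i, ∑ j, Y i j ^ 2 := Real.sq_sqrt (by positivity)
    rw [h1, Finset.sum_comm]
    exact Finset.sum_congr rfl fun j _ => (sq_e2norm _).symm
  have hmC : mNorm NC (PC * Y) ^ 2 = ∑ j, NC (fun i => (PC * Y) i j) ^ 2 :=
    Real.sq_sqrt (by positivity)
  set M : Matrix (Fin n) (Fin p) ℝ := X - Matrix.vecMulVec (fun _ => 1) xbar with hM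
  have hmR : mNorm NR M ^ 2 = ∑ j, NR (fun i => M i j) ^ 2 :=
    Real.sq_sqrt (by positivity)
  -- bound on ∑ a j ^ 2
  have ha2 : ∑ j, a j ^ 2 ≤ L ^ 2 * n * mNorm NR M ^ 2 := by
    have h1 : e2norm a ≤ L * ∑ i, e2norm ((fun j' => X i j') - xbar) := by
      calc e2norm a ≤ ∑ i, e2norm (V i) := e2norm_sum_le V
        _ ≤ ∑ i, L * e2norm ((fun j' => X i j') - xbar) :=
            Finset.sum_le_sum fun i _ => hL i _ xbar
        _ = L * ∑ i, e2norm ((fun j' => X i j') - xbar) := (Finset.mul_sum _ _ _).symm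
    have h2 : (∑ i, e2norm ((fun j' => X i j') - xbar)) ^ 2
        ≤ n * ∑ i, e2norm ((fun j' => X i j') - xbar) ^ 2 := by
      simpa [Finset.card_univ] using
        sq_sum_le_card_mul_sum_sq (s := (Finset.univ : Finset (Fin n)))
          (f := fun i => e2norm ((fun j' => X i j') - xbar))
    have h3 : ∑ i, e2norm ((fun j' => X i j') - xbar) ^ 2 = ∑ j, e2norm (fun i => M i j) ^ 2 := by
      simp only [sq_e2norm]
      rw [Finset.sum_comm]
      apply Finset.sum_congr rfl
      intro j _
      apply Finset.sum_congr rfl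
      intro i _
      simp [hM, Matrix.sub_apply, Matrix.vecMulVec_apply, Pi.sub_apply]
    have h4 : ∑ j, e2norm (fun i => M i j) ^ 2 ≤ ∑ j, NR (fun i => M i j) ^ 2 :=
      Finset.sum_le_sum fun j _ => pow_le_pow_left₀ (e2norm_nonneg _) (hNR_ge _) 2
    have h5 : ∑ j, a j ^ 2 = e2norm a ^ 2 := (sq_e2norm a).symm
    have h6 : e2norm a ^ 2 ≤ (L * ∑ i, e2norm ((fun j' => X i j') - xbar)) ^ 2 := by
      have := pow_le_pow_left₀ (e2norm_nonneg a) h1 2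
      exact this
    rw [h5, hmR]
    calc e2norm a ^ 2 ≤ (L * ∑ i, e2norm ((fun j' => X i j') - xbar)) ^ 2 := h6
      _ = L ^ 2 * (∑ i, e2norm ((fun j' => X i j') - xbar)) ^ 2 := by ring
      _ ≤ L ^ 2 * (n * ∑ i, e2norm ((fun j' => X i j') - xbar) ^ 2) :=
          mul_le_mul_of_nonneg_left h2 (sq_nonneg L)
      _ = L ^ 2 * n * ∑ i, e2norm ((fun j' => X i j') - xbar) ^ 2 := by ring
      _ = L ^ 2 * n * ∑ j, e2norm (fun i => M i j) ^ 2 := by rw [h3]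
      _ ≤ L ^ 2 * n * ∑ j, NR (fun i => M i j) ^ 2 := by
          exact mul_le_mul_of_nonneg_left h4 (by positivity)
  -- bound on ∑ b j ^ 2
  have hb2 : ∑ j, b j ^ 2 ≤ (n:ℝ) ^ 2 * L ^ 2 * e2norm (xbar - xstar) ^ 2 := by
    have h1 : e2norm b ≤ (n:ℝ) * (L * e2norm (xbar - xstar)) := by
      calc e2norm b ≤ ∑ i, e2norm (W i) := e2norm_sum_le W
        _ ≤ ∑ _i : Fin n, L * e2norm (xbar - xstar) :=
            Finset.sum_le_sum fun i _ => hL i xbar xstar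
        _ = (n:ℝ) * (L * e2norm (xbar - xstar)) := by
            rw [Finset.sum_const, Finset.card_univ, Fintype.card_fin, nsmul_eq_mul]
    have h5 : ∑ j, b j ^ 2 = e2norm b ^ 2 := (sq_e2norm b).symm
    rw [h5]
    calc e2norm b ^ 2 ≤ ((n:ℝ) * (L * e2norm (xbar - xstar))) ^ 2 :=
        pow_le_pow_left₀ (e2norm_nonneg b) h1 2
      _ = (n:ℝ) ^ 2 * L ^ 2 * e2norm (xbar - xstar) ^ 2 := by ring
  -- put it together
  have key : froNorm Y ^ 2 ≤ 3 * mNorm NC (PC * Y) ^ 2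
      + 3 * (n:ℝ)⁻¹ ^ 2 * e2norm c ^ 2 * (∑ j, a j ^ 2)
      + 3 * (n:ℝ)⁻¹ ^ 2 * e2norm c ^ 2 * (∑ j, b j ^ 2) := by
    rw [hfro, hmC]
    calc ∑ j, e2norm (fun i => Y i j) ^ 2
        ≤ ∑ j, 3 * (NC (fun i => (PC * Y) i j) ^ 2
          + ((n:ℝ)⁻¹ * a j) ^ 2 * e2norm c ^ 2 + ((n:ℝ)⁻¹ * b j) ^ 2 * e2norm c ^ 2) :=
          Finset.sum_le_sum fun j _ => hcolbound j
      _ = 3 * (∑ j, NC (fun i => (PC * Y) i j) ^ 2)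
          + 3 * (n:ℝ)⁻¹ ^ 2 * e2norm c ^ 2 * (∑ j, a j ^ 2)
          + 3 * (n:ℝ)⁻¹ ^ 2 * e2norm c ^ 2 * (∑ j, b j ^ 2) := by
          rw [Finset.mul_sum, Finset.mul_sum, Finset.mul_sum, ← Finset.sum_add_distrib,
            ← Finset.sum_add_distrib]
          apply Finset.sum_congr rfl
          intro j _
          ring
  calc froNorm Y ^ 2
      ≤ 3 * mNorm NC (PC * Y) ^ 2
        + 3 * (n:ℝ)⁻¹ ^ 2 * e2norm c ^ 2 * (∑ j, a j ^ 2)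
        + 3 * (n:ℝ)⁻¹ ^ 2 * e2norm c ^ 2 * (∑ j, b j ^ 2) := key
    _ ≤ 3 * mNorm NC (PC * Y) ^ 2
        + 3 * (n:ℝ)⁻¹ ^ 2 * e2norm c ^ 2 * (L ^ 2 * n * mNorm NR M ^ 2)
        + 3 * (n:ℝ)⁻¹ ^ 2 * e2norm c ^ 2 * ((n:ℝ) ^ 2 * L ^ 2 * e2norm (xbar - xstar) ^ 2) := by
        gcongr
    _ = 3 * mNorm NC (PC * Y) ^ 2
        + 3 * L ^ 2 * e2norm c ^ 2 / n * mNorm NR M ^ 2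
        + 3 * L ^ 2 * e2norm c ^ 2 * e2norm (xbar - xstar) ^ 2 := by
        field_simp
end

section
/- Let R ∈ ℝ^{n×n} be nonnegative and row-stochastic, for j ∈ {1,…,n} let r_j = |{i : R_{ji} > 0}| ≥ 1, let β ∈ ℝ, let x₁,…,xₙ, u₁,…,uₙ ∈ ℝ^p, and fix j ∈ {1,…,n}. Let i be uniformly distributed on {1,…,n}. Then E[ 𝟙_{R_{ji} > 0}·( (1 − βn/r_j)·x_j + (βn/r_j)·Σ_{l=1}^n R_{jl} u_l + βnR_{ji}·(x_i − u_i) ) + 𝟙_{R_{ji} = 0}·x_j ] = (1 − β)·x_j + β·Σ_{l=1}^n R_{jl} x_l. -/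
open Matrix
open scoped BigOperators

theorem stmt14 {n p : ℕ} (R : Matrix (Fin n) (Fin n) ℝ)
    (hR_nonneg : ∀ i j, 0 ≤ R i j) (hR_row : ∀ i, ∑ j, R i j = 1)
    (β : ℝ) (x u : Fin n → Fin p → ℝ) (j : Fin n) :
    let rj : ℝ := ((Finset.univ.filter fun i => 0 < R j i).card : ℝ)
    (n : ℝ)⁻¹ • ∑ i : Fin n,
        (if 0 < R j i then
          (1 - β * n / rj) • x j + (β * n / rj) • (∑ l, R j l • u l)
            + (β * n * R j i) • (x i - u i)
        else x j)
      = (1 - β) • x j + β • ∑ l, R j l • x l := by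
  intro rj
  have hn : (0:ℝ) < n := by exact_mod_cast j.pos
  set S := Finset.univ.filter fun i => 0 < R j i with hS
  have hSne : S.Nonempty := by
    by_contra h
    rw [Finset.not_nonempty_iff_eq_empty, Finset.filter_eq_empty_iff] at h
    have h0 : ∑ l, R j l = 0 := Finset.sum_eq_zero fun l _ =>
      le_antisymm (not_lt.mp (h (Finset.mem_univ l))) (hR_nonneg j l)
    rw [hR_row] at h0; norm_num at h0
  have hrj : (0:ℝ) < rj := by
    show (0:ℝ) < (S.card : ℝ)
    exact_mod_cast Finset.card_pos.mpr hSne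
  funext k
  have hfull : ∀ (v : Fin n → Fin p → ℝ),
      ∑ i ∈ S, R j i * v i k = ∑ i, R j i * v i k := by
    intro v
    apply Finset.sum_filter_of_ne
    intro i _ hne
    rcases lt_or_eq_of_le (hR_nonneg j i) with h | h
    · exact h
    · exact absurd (by rw [← h]; ring) hne
  have hcardS : (S.card : ℝ) + ((Finset.univ.filter fun i => ¬ 0 < R j i).card : ℝ)
      = (n : ℝ) := by
    have := Finset.card_filter_add_card_filter_not (s := (Finset.univ : Finset (Fin n)))
      (p := fun i => 0 < R j i)
    rw [Finset.card_univ, Fintype.card_fin] at this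
    exact_mod_cast this
  simp only [Pi.smul_apply, Finset.sum_apply, Pi.add_apply, Pi.sub_apply, smul_eq_mul,
    apply_ite (fun f : Fin p → ℝ => f k)]
  rw [Finset.sum_ite, Finset.sum_const, ← hS]
  simp only [Finset.sum_add_distrib, Finset.sum_const, nsmul_eq_mul, mul_sub,
    Finset.sum_sub_distrib, ← Finset.mul_sum]
  have h1 : ∑ i ∈ S, R j i * x i k = ∑ i, R j i * x i k := hfull x
  have h2 : ∑ i ∈ S, R j i * u i k = ∑ i, R j i * u i k := hfull u
  have h3 : ∑ i ∈ S, β * ↑n * R j i * (x i k - u i k)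
      = β * ↑n * (∑ i, R j i * x i k - ∑ i, R j i * u i k) := by
    rw [← h1, ← h2, ← Finset.sum_sub_distrib, Finset.mul_sum]
    congr 1; ext i; ring
  have h1' : ∑ i ∈ S, β * ↑n * R j i * x i k = β * ↑n * ∑ i, R j i * x i k := by
    rw [← h1, Finset.mul_sum]; apply Finset.sum_congr rfl; intros; ring
  have h2' : ∑ i ∈ S, β * ↑n * R j i * u i k = β * ↑n * ∑ i, R j i * u i k := by
    rw [← h2, Finset.mul_sum]; apply Finset.sum_congr rfl; intros; ring
  rw [h1', h2']
  have hc : ((S.card : ℕ) : ℝ) = rj := rfl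
  have hm : ((Finset.univ.filter fun i => ¬ 0 < R j i).card : ℝ) = (n:ℝ) - rj := by
    rw [← hc]; linarith [hcardS]
  rw [hc, hm]
  field_simp
  ring
end

section
/- Let Ā ∈ ℝ^{7×7} be entrywise nonnegative, let ρ ∈ (0,1), and let v̄ ∈ ℝ⁷ be entrywise positive with Āv̄ = ρv̄. Let (d̄^k)_{k≥0} be a sequence of entrywise nonnegative vectors in ℝ⁷ satisfying, for every k ≥ 0: d̄^k₅ ≤ Σ_{j=1}^4 Ā_{5j} d̄^k_j; d̄^k₆ ≤ Σ_{j=1}^5 Ā_{6j} d̄^k_j; d̄^k₇ ≤ Σ_{j=1}^6 Ā_{7j} d̄^k_j; and d̄^{k+1}_i ≤ Σ_{j=1}^7 Ā_{ij} d̄^k_j for i = 1,2,3,4. Then, with C = max_{1≤i≤4} d̄^0_i/v̄_i, one has d̄^k_i ≤ C·ρ^k·v̄_i for all k ≥ 0 and all i = 1,…,7. -/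
open Matrix
open scoped BigOperators

theorem stmt18 (A : Matrix (Fin 7) (Fin 7) ℝ) (hA : ∀ i j, 0 ≤ A i j)
    (ρ : ℝ) (hρ : ρ ∈ Set.Ioo (0 : ℝ) 1)
    (v : Fin 7 → ℝ) (hv : ∀ i, 0 < v i) (hAv : A *ᵥ v = ρ • v)
    (d : ℕ → Fin 7 → ℝ) (hd_nonneg : ∀ k i, 0 ≤ d k i)
    (h_row5 : ∀ k, d k 4 ≤ A 4 0 * d k 0 + A 4 1 * d k 1 + A 4 2 * d k 2 + A 4 3 * d k 3)
    (h_row6 : ∀ k, d k 5 ≤ A 5 0 * d k 0 + A 5 1 * d k 1 + A 5 2 * d k 2 + A 5 3 * d k 3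
      + A 5 4 * d k 4)
    (h_row7 : ∀ k, d k 6 ≤ A 6 0 * d k 0 + A 6 1 * d k 1 + A 6 2 * d k 2 + A 6 3 * d k 3
      + A 6 4 * d k 4 + A 6 5 * d k 5)
    (h_rec : ∀ k, ∀ i : Fin 7, (i : ℕ) ≤ 3 → d (k + 1) i ≤ ∑ j, A i j * d k j) :
    let C : ℝ := max (max (d 0 0 / v 0) (d 0 1 / v 1)) (max (d 0 2 / v 2) (d 0 3 / v 3))
    ∀ k, ∀ i : Fin 7, d k i ≤ C * ρ ^ k * v i := by
  intro C
  have eig : ∀ i : Fin 7, A i 0 * v 0 + A i 1 * v 1 + A i 2 * v 2 + A i 3 * v 3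
      + A i 4 * v 4 + A i 5 * v 5 + A i 6 * v 6 = ρ * v i := by
    intro i
    have := congrFun hAv i
    simpa [Matrix.mulVec, dotProduct, Fin.sum_univ_seven, add_assoc, smul_eq_mul] using this
  have hC0 : (0:ℝ) ≤ C := by
    have : (0:ℝ) ≤ d 0 0 / v 0 := div_nonneg (hd_nonneg 0 0) (hv 0).le
    exact this.trans ((le_max_left _ _).trans (le_max_left _ _))
  -- extension lemma
  have ext : ∀ k (c : ℝ), 0 ≤ c → (∀ i : Fin 7, (i : ℕ) ≤ 3 → d k i ≤ c * v i) →
      ∀ i : Fin 7, d k i ≤ c * v i := by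
    intro k c hc h
    have h0 := h 0 (by decide)
    have h1 := h 1 (by decide)
    have h2 := h 2 (by decide)
    have h3 := h 3 (by decide)
    have hrle : ∀ i : Fin 7, c * (ρ * v i) ≤ c * v i := by
      intro i
      nlinarith [mul_nonneg (sub_nonneg.2 hρ.2.le) (mul_nonneg hc (hv i).le)]
    have h4 : d k 4 ≤ c * v 4 := by
      have b0 := mul_le_mul_of_nonneg_left h0 (hA 4 0)
      have b1 := mul_le_mul_of_nonneg_left h1 (hA 4 1)
      have b2 := mul_le_mul_of_nonneg_left h2 (hA 4 2)
      have b3 := mul_le_mul_of_nonneg_left h3 (hA 4 3)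
      have ec : c * (A 4 0 * v 0 + A 4 1 * v 1 + A 4 2 * v 2 + A 4 3 * v 3
          + A 4 4 * v 4 + A 4 5 * v 5 + A 4 6 * v 6) = c * (ρ * v 4) := by rw [eig 4]
      have e4 : 0 ≤ c * (A 4 4 * v 4) := mul_nonneg hc (mul_nonneg (hA 4 4) (hv 4).le)
      have e5 : 0 ≤ c * (A 4 5 * v 5) := mul_nonneg hc (mul_nonneg (hA 4 5) (hv 5).le)
      have e6 : 0 ≤ c * (A 4 6 * v 6) := mul_nonneg hc (mul_nonneg (hA 4 6) (hv 6).le)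
      have := h_row5 k
      nlinarith [hrle 4]
    have h5 : d k 5 ≤ c * v 5 := by
      have b0 := mul_le_mul_of_nonneg_left h0 (hA 5 0)
      have b1 := mul_le_mul_of_nonneg_left h1 (hA 5 1)
      have b2 := mul_le_mul_of_nonneg_left h2 (hA 5 2)
      have b3 := mul_le_mul_of_nonneg_left h3 (hA 5 3)
      have b4 := mul_le_mul_of_nonneg_left h4 (hA 5 4)
      have ec : c * (A 5 0 * v 0 + A 5 1 * v 1 + A 5 2 * v 2 + A 5 3 * v 3
          + A 5 4 * v 4 + A 5 5 * v 5 + A 5 6 * v 6) = c * (ρ * v 5) := by rw [eig 5]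
      have e5 : 0 ≤ c * (A 5 5 * v 5) := mul_nonneg hc (mul_nonneg (hA 5 5) (hv 5).le)
      have e6 : 0 ≤ c * (A 5 6 * v 6) := mul_nonneg hc (mul_nonneg (hA 5 6) (hv 6).le)
      have := h_row6 k
      nlinarith [hrle 5]
    have h6 : d k 6 ≤ c * v 6 := by
      have b0 := mul_le_mul_of_nonneg_left h0 (hA 6 0)
      have b1 := mul_le_mul_of_nonneg_left h1 (hA 6 1)
      have b2 := mul_le_mul_of_nonneg_left h2 (hA 6 2)
      have b3 := mul_le_mul_of_nonneg_left h3 (hA 6 3)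
      have b4 := mul_le_mul_of_nonneg_left h4 (hA 6 4)
      have b5 := mul_le_mul_of_nonneg_left h5 (hA 6 5)
      have ec : c * (A 6 0 * v 0 + A 6 1 * v 1 + A 6 2 * v 2 + A 6 3 * v 3
          + A 6 4 * v 4 + A 6 5 * v 5 + A 6 6 * v 6) = c * (ρ * v 6) := by rw [eig 6]
      have e6 : 0 ≤ c * (A 6 6 * v 6) := mul_nonneg hc (mul_nonneg (hA 6 6) (hv 6).le)
      have := h_row7 k
      nlinarith [hrle 6]
    intro i
    fin_cases i <;> assumption
  -- main induction on the first four coordinates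
  have main : ∀ k, ∀ i : Fin 7, (i : ℕ) ≤ 3 → d k i ≤ C * ρ ^ k * v i := by
    intro k
    induction k with
    | zero =>
      intro i hi
      have : d 0 i / v i ≤ C := by
        fin_cases i <;> simp_all <;>
          first
          | exact (le_max_left _ _).trans (le_max_left _ _)
          | exact (le_max_right _ _).trans (le_max_left _ _)
          | exact (le_max_left _ _).trans (le_max_right _ _)
          | exact (le_max_right _ _).trans (le_max_right _ _)
      have := (div_le_iff₀ (hv i)).mp this
      simpa using this.trans_eq (by ring)
    | succ k IH =>
      intro i hi
      have hck : (0:ℝ) ≤ C * ρ ^ k := mul_nonneg hC0 (pow_nonneg hρ.1.le k)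
      have all_k : ∀ j : Fin 7, d k j ≤ C * ρ ^ k * v j := ext k (C * ρ ^ k) hck IH
      have brec := h_rec k i hi
      have b : ∀ j : Fin 7, A i j * d k j ≤ A i j * (C * ρ ^ k * v j) := fun j =>
        mul_le_mul_of_nonneg_left (all_k j) (hA i j)
      have ec : (C * ρ ^ k) * (A i 0 * v 0 + A i 1 * v 1 + A i 2 * v 2 + A i 3 * v 3
          + A i 4 * v 4 + A i 5 * v 5 + A i 6 * v 6) = (C * ρ ^ k) * (ρ * v i) := by
        rw [eig i]
      rw [Fin.sum_univ_seven] at brec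
      have goal' : d (k+1) i ≤ (C * ρ ^ k) * (ρ * v i) := by
        nlinarith [b 0, b 1, b 2, b 3, b 4, b 5, b 6]
      calc d (k+1) i ≤ (C * ρ ^ k) * (ρ * v i) := goal'
        _ = C * ρ ^ (k+1) * v i := by ring
  intro k i
  have := ext k (C * ρ ^ k) (mul_nonneg hC0 (pow_nonneg hρ.1.le k)) (main k)
  exact this i
end
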